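/- Let A satisfy A² = 0, (A†)² = 0, A A† A = A, and let |ψ⟩ be a unit vector with A† |ψ⟩ = 0 and A† A |ψ⟩ = |ψ⟩. Then exp(θ(A − A†))|ψ⟩ = cos(θ)|ψ⟩ + sin(θ) A|ψ⟩. -/

import Mathlib

open NormedSpace ContinuousLinearMap
open scoped Nat

/-!
On the plane spanned by `ψ` and `A ψ`, `K = A - A†` acts as the generator of rotations:
`K ψ = A ψ` and `K (A ψ) = -ψ`. Hence `K ^ 2 = -1` there, and splitting the exponential series
into even and odd terms yields the cosine and sine series.
-/

namespace ContinuousLinearMap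

theorem pow_two_mul_apply_of_sq_apply_eq_neg {R M : Type*} [Ring R] [TopologicalSpace M]
    [AddCommGroup M] [Module R M] {K : M →L[R] M} {w : M} (h : (K ^ 2) w = -w) (n : ℕ) :
    (K ^ (2 * n)) w = (-1 : R) ^ n • w := by
  induction n with
  | zero => simp
  | succ n ih =>
    rw [mul_add, mul_one, pow_add, mul_apply_eq_comp, h, map_neg, ih, pow_succ, mul_neg_one,
      neg_smul]

theorem exp_smul_apply_eq_cos_smul_add_sin_smul {E : Type*} [NormedAddCommGroup E]
    [NormedSpace ℂ E] [CompleteSpace E] {K : E →L[ℂ] E} {u v : E}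
    (hu : K u = v) (hv : K v = -u) (z : ℂ) :
    exp (z • K) u = Complex.cos z • u + Complex.sin z • v := by
  have hu2 : (K ^ 2) u = -u := by rw [sq, mul_apply_eq_comp, hu, hv]
  have hv2 : (K ^ 2) v = -v := by rw [sq, mul_apply_eq_comp, hv, map_neg, hu]
  have hexp : HasSum (fun n => ((n ! : ℂ)⁻¹ • (z • K) ^ n) u) (exp (z • K) u) :=
    (exp_series_hasSum_exp' (𝕂 := ℂ) (z • K)).mapL (apply ℂ E u)
  refine hexp.unique (HasSum.even_add_odd ?_ ?_)
  · convert (Complex.hasSum_cos z).smul_const u using 2 with n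
    rw [smul_apply, smul_pow, smul_apply, pow_two_mul_apply_of_sq_apply_eq_neg hu2]
    module
  · convert (Complex.hasSum_sin z).smul_const v using 2 with n
    rw [smul_apply, smul_pow, smul_apply, pow_succ K, mul_apply_eq_comp, hu,
      pow_two_mul_apply_of_sq_apply_eq_neg hv2]
    module

end ContinuousLinearMap

theorem exp_ucc_on_excitable_state_general {E : Type*} [NormedAddCommGroup E]
    [InnerProductSpace ℂ E] [CompleteSpace E]
    (A : E →L[ℂ] E) (h1 : A * A = 0)
    (ψ : E) (hψ1 : adjoint A ψ = 0) (hψ2 : adjoint A (A ψ) = ψ) (θ : ℝ) :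
    exp ((θ : ℂ) • (A - adjoint A)) ψ =
      (Real.cos θ : ℂ) • ψ + (Real.sin θ : ℂ) • A ψ := by
  have hAAψ : A (A ψ) = 0 := by rw [← mul_apply_eq_comp, h1, zero_apply]
  rw [exp_smul_apply_eq_cos_smul_add_sin_smul (u := ψ) (v := A ψ) (by simp [hψ1])
    (by simp [hAAψ, hψ2]), Complex.ofReal_cos, Complex.ofReal_sin]

/-- On an 'excitable' state `ψ` (a unit vector with `A† ψ = 0` and `A† A ψ = ψ`), the UCC
factor acts as `exp (θ (A − A†)) ψ = cos θ · ψ + sin θ · A ψ`. -/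
theorem exp_ucc_on_excitable_state {E : Type*} [NormedAddCommGroup E]
    [InnerProductSpace ℂ E] [FiniteDimensional ℂ E] [CompleteSpace E]
    (A : E →L[ℂ] E) (h1 : A * A = 0) (h2 : adjoint A * adjoint A = 0)
    (h3 : A * adjoint A * A = A)
    (ψ : E) (hψ : ‖ψ‖ = 1) (hψ1 : adjoint A ψ = 0) (hψ2 : adjoint A (A ψ) = ψ) (θ : ℝ) :
    exp ((θ : ℂ) • (A - adjoint A)) ψ =
      (Real.cos θ : ℂ) • ψ + (Real.sin θ : ℂ) • A ψ :=
  exp_ucc_on_excitable_state_general A h1 ψ hψ1 hψ2 θ
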